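/- Let P, Q ∈ ℂ[x, y, y'] be coprime polynomials and X_α = ∂/∂x + y'∂/∂y + (6y² + α⁵x)∂/∂y'. If Q·X_α(P) - P·X_α(Q) + 12yQ² - P² = 0, then there exists a polynomial L with X_α(P) + 12yQ = LP and X_α(Q) + P = LQ. -/

import Mathlib

open MvPolynomial

noncomputable section

/-- Polynomials in the variables `x = X 0`, `y = X 1`, `y' = X 2`, `α = X 3`. -/
abbrev P4 : Type := MvPolynomial (Fin 4) ℂ

/-- The derivation `X_α = ∂/∂x + y'∂/∂y + (6y² + α⁵x)∂/∂y'` of `ℂ[x, y, y', α]`. -/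
def Xa (f : P4) : P4 :=
  pderiv 0 f + X 2 * pderiv 1 f + (6 * (X 1) ^ 2 + (X 3) ^ 5 * X 0) * pderiv 2 f

theorem IsRelPrime.exists_eq_mul_of_mul_eq_mul {α : Type*} [CommMonoidWithZero α]
    [IsCancelMulZero α] [DecompositionMonoid α] {a b c d : α} (hab : IsRelPrime a b)
    (h : b * c = a * d) :
    ∃ l, c = l * a ∧ d = l * b := by
  rcases eq_or_ne b 0 with rfl | hb
  · obtain ⟨u, rfl⟩ := isRelPrime_zero_right.mp hab
    refine ⟨c * ↑u⁻¹, by simp, ?_⟩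
    rw [mul_zero]; exact u.mul_right_eq_zero.mp (by rw [← h, zero_mul])
  · obtain ⟨l, rfl⟩ := hab.symm.dvd_of_dvd_mul_left ⟨c, h.symm⟩
    refine ⟨l, mul_left_cancel₀ hb ?_, mul_comm _ _⟩
    rw [h, mul_left_comm, mul_comm a]

/-- Bézout step: if `P, Q` are coprime and
`Q·X_α(P) - P·X_α(Q) + 12yQ² - P² = 0`, then there is a polynomial `L` with
`X_α(P) + 12yQ = LP` and `X_α(Q) + P = LQ`. -/
theorem stmt13 (P Q : P4) (hPQ : IsRelPrime P Q)
    (h : Q * Xa P - P * Xa Q + 12 * X 1 * Q ^ 2 - P ^ 2 = 0) :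
    ∃ L : P4, Xa P + 12 * X 1 * Q = L * P ∧ Xa Q + P = L * Q :=
  IsRelPrime.exists_eq_mul_of_mul_eq_mul hPQ (by linear_combination h)
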